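/- arXiv:2310.07905 — 3 statements merged into one kernel-verified Lean document; each statement's English description precedes it below -/
import Mathlib

section
/- Let τ be a nonnegative random variable with P(τ ≤ t) ~ A t^d as t → 0+ for constants A > 0 and d ≥ 1 (meaning P(τ ≤ t)/(A t^d) → 1), and suppose E[(min{τ₁,...,τ_N})^m] < ∞ for all large N, where τ₁, τ₂, ... are i.i.d. copies of τ. Then for every m > 0, N^{m/d} E[(min{τ₁,...,τ_N})^m] → Γ(1 + m/d) / A^{m/d} as N → ∞. -/
open MeasureTheory ProbabilityTheory Filter Set
open scoped ENNReal Topology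

lemma aux_measurable_inf' {Ω : Type*} [MeasurableSpace Ω] {ι : Type*} {s : Finset ι}
    (hs : s.Nonempty) {f : ι → Ω → ℝ} (hf : ∀ n ∈ s, Measurable (f n)) :
    Measurable fun ω => s.inf' hs (fun n => f n ω) := by
  have : Measurable (s.inf' hs f) :=
    Finset.inf'_induction hs _ (fun _f hf _g hg => hf.inf hg) fun n hn => hf n hn
  convert this using 1
  ext ω
  simp [Finset.inf'_apply]

lemma aux_cov (g : ℝ → ℝ≥0∞) (hg : Measurable g) {c : ℝ} (hc : 0 < c) :
    ∫⁻ s in Ioi (0:ℝ), g (c * s) = ENNReal.ofReal c⁻¹ * ∫⁻ t in Ioi (0:ℝ), g t := by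
  have hpre : (fun t : ℝ => c * t) ⁻¹' Ioi 0 = Ioi 0 := by
    ext t
    simp only [Set.mem_preimage, Set.mem_Ioi]
    constructor
    · intro h
      exact lt_of_not_ge fun ht => absurd h (not_lt.2 (mul_nonpos_of_nonneg_of_nonpos hc.le ht))
    · exact fun h => mul_pos hc h
  have hmap : Measure.map (fun t : ℝ => c * t) (volume.restrict (Ioi 0)) =
      ENNReal.ofReal c⁻¹ • (volume.restrict (Ioi (0:ℝ))) := by
    conv_lhs => rw [← hpre]
    rw [← Measure.restrict_map (measurable_const_mul c) measurableSet_Ioi,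
      Real.map_volume_mul_left hc.ne', Measure.restrict_smul,
      abs_of_nonneg (inv_nonneg.2 hc.le)]
  calc ∫⁻ s in Ioi (0:ℝ), g (c * s)
      = ∫⁻ t, g t ∂(Measure.map (fun t : ℝ => c * t) (volume.restrict (Ioi 0))) :=
        (lintegral_map hg (measurable_const_mul c)).symm
    _ = ENNReal.ofReal c⁻¹ * ∫⁻ t in Ioi (0:ℝ), g t := by
        rw [hmap, lintegral_smul_measure, smul_eq_mul]

lemma aux_one_sub_pow {x : ℕ → ℝ} {b : ℝ} (hx0 : ∀ n, 0 ≤ x n) (hb : 0 < b)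
    (hlim : Tendsto (fun n : ℕ => (n : ℝ) * x n) atTop (𝓝 b)) :
    Tendsto (fun n => (1 - x n) ^ n) atTop (𝓝 (Real.exp (-b))) := by
  have hx_to_zero : Tendsto x atTop (𝓝 0) := by
    have h1 : Tendsto (fun n : ℕ => ((n : ℝ) * x n) * (n : ℝ)⁻¹) atTop (𝓝 (b * 0)) :=
      hlim.mul tendsto_inv_atTop_nhds_zero_nat
    rw [mul_zero] at h1
    apply h1.congr'
    filter_upwards [eventually_gt_atTop 0] with n hn
    have : (n : ℝ) ≠ 0 := Nat.cast_ne_zero.2 hn.ne'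
    field_simp
  have hx_pos : ∀ᶠ n in atTop, 0 < x n := by
    filter_upwards [hlim.eventually (eventually_gt_nhds hb)] with n hn
    rcases (hx0 n).lt_or_eq with h | h
    · exact h
    · exfalso; rw [← h, mul_zero] at hn; exact lt_irrefl 0 hn
  have hx_lt_one : ∀ᶠ n in atTop, x n < 1 :=
    hx_to_zero.eventually (eventually_lt_nhds one_pos)
  -- slope of log (1 - y) at 0
  have hderiv : HasDerivAt (fun y : ℝ => Real.log (1 - y)) (-1) 0 := by
    have h1 : HasDerivAt (fun y : ℝ => 1 - y) (-1) 0 := (hasDerivAt_id 0).const_sub 1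
    have h2 : HasDerivAt Real.log (1 : ℝ) ((1:ℝ) - 0) := by
      simpa using Real.hasDerivAt_log (by norm_num : (1:ℝ) - 0 ≠ 0)
    simpa [Function.comp_def] using h2.comp 0 h1
  have hslope : Tendsto (fun y : ℝ => Real.log (1 - y) / y) (𝓝[≠] (0:ℝ)) (𝓝 (-1)) := by
    have := hasDerivAt_iff_tendsto_slope.mp hderiv
    apply this.congr
    intro y
    simp [slope_def_field]
  have hxne : Tendsto x atTop (𝓝[≠] (0:ℝ)) := by
    rw [tendsto_nhdsWithin_iff]
    exact ⟨hx_to_zero, by filter_upwards [hx_pos] with n hn using hn.ne'⟩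
  have hlog : Tendsto (fun n : ℕ => (n : ℝ) * Real.log (1 - x n)) atTop (𝓝 (-b)) := by
    have h1 : Tendsto (fun n : ℕ => ((n : ℝ) * x n) * (Real.log (1 - x n) / x n)) atTop
        (𝓝 (b * (-1))) := hlim.mul (hslope.comp hxne)
    rw [mul_neg_one] at h1
    apply h1.congr'
    filter_upwards [hx_pos] with n hn
    field_simp
  have hfinal : Tendsto (fun n : ℕ => Real.exp ((n : ℝ) * Real.log (1 - x n))) atTop
      (𝓝 (Real.exp (-b))) := (Real.continuous_exp.continuousAt.tendsto).comp hlog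
  apply hfinal.congr'
  filter_upwards [hx_lt_one] with n hn
  rw [Real.exp_nat_mul, Real.exp_log (by linarith)]

set_option maxHeartbeats 1000000 in
/-- Moments of fastest first passage times: if `P(τ ≤ t) ~ A t^d` as `t → 0+` and
`τ₁, τ₂, …` are i.i.d. copies of `τ` with `E[(min{τ₁,…,τ_N})^m] < ∞` for all large `N`,
then `N^{m/d} E[(min{τ₁,…,τ_N})^m] → Γ(1 + m/d) / A^{m/d}` as `N → ∞`. -/
theorem fastest_fpt_moment_asymptotics {Ω : Type*} [MeasurableSpace Ω]
    (μ : Measure Ω) [IsProbabilityMeasure μ]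
    (τ : Ω → ℝ) (hτmeas : Measurable τ) (hτnonneg : ∀ ω, 0 ≤ τ ω)
    (A d : ℝ) (hA : 0 < A) (hd : 1 ≤ d)
    (hshort : Tendsto (fun t : ℝ => (μ {ω | τ ω ≤ t}).toReal / (A * t ^ d))
      (𝓝[>] 0) (nhds 1))
    (τs : ℕ → Ω → ℝ) (hmeas : ∀ n, Measurable (τs n))
    (hindep : iIndepFun τs μ)
    (hident : ∀ n, Measure.map (τs n) μ = Measure.map τ μ)
    (m : ℝ) (hm : 0 < m)
    (hfin : ∃ N₀ : ℕ, ∀ N ≥ N₀,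
      ∫⁻ ω, ENNReal.ofReal ((⨅ n : Fin N, τs n ω) ^ m) ∂μ ≠ ∞) :
    Tendsto (fun N : ℕ => (N : ℝ) ^ (m / d) *
        (∫⁻ ω, ENNReal.ofReal ((⨅ n : Fin N, τs n ω) ^ m) ∂μ).toReal)
      atTop (nhds (Real.Gamma (1 + m / d) / A ^ (m / d))) := by
  classical
  obtain ⟨N₀, hN₀⟩ := hfin
  set N₁ := max N₀ 1 with hN₁def
  have hN₁0 : N₀ ≤ N₁ := le_max_left _ _
  have hN₁1 : 1 ≤ N₁ := le_max_right _ _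
  have hd0 : (0:ℝ) < d := lt_of_lt_of_le one_pos hd
  set F : ℝ → ℝ := fun t => (μ {ω | τ ω ≤ t}).toReal with hFdef
  set G : ℝ → ℝ≥0∞ := fun t => μ {ω | t < τ ω} with hGdef
  have hFe_ne_top : ∀ t : ℝ, μ {ω | τ ω ≤ t} ≠ ∞ := fun t => measure_ne_top μ _
  have hF0 : ∀ t, 0 ≤ F t := fun t => ENNReal.toReal_nonneg
  have hG_eq : ∀ t, G t = ENNReal.ofReal (1 - F t) := by
    intro t
    have hc : {ω | t < τ ω} = {ω | τ ω ≤ t}ᶜ := by ext ω; simp [not_le]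
    show μ {ω | t < τ ω} = _
    rw [hc, measure_compl (measurableSet_le hτmeas measurable_const) (hFe_ne_top t), measure_univ,
      ENNReal.ofReal_sub 1 (hF0 t), ENNReal.ofReal_one,
      ENNReal.ofReal_toReal (hFe_ne_top t)]
  have hF1 : ∀ t, F t ≤ 1 := by
    intro t
    have h := prob_le_one (μ := μ) (s := {ω | τ ω ≤ t})
    simpa using ENNReal.toReal_mono ENNReal.one_ne_top h
  have hGanti : Antitone G := fun s t hst => measure_mono (fun ω h => lt_of_le_of_lt hst h)
  have hGmeas : Measurable G := hGanti.measurable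
  -- tail probability of the minimum
  have htail : ∀ N : ℕ, 1 ≤ N → ∀ t : ℝ, μ {ω | t < ⨅ n : Fin N, τs n ω} = G t ^ N := by
    intro N hN t
    haveI : Nonempty (Fin N) := Fin.pos_iff_nonempty.mp hN
    have hset : {ω | t < ⨅ n : Fin N, τs n ω} = ⋂ n ∈ Finset.range N, τs n ⁻¹' Ioi t := by
      ext ω
      simp only [Set.mem_setOf_eq, Set.mem_iInter, Finset.mem_range, Set.mem_preimage,
        Set.mem_Ioi]
      rw [← Finset.inf'_univ_eq_ciInf, Finset.lt_inf'_iff]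
      constructor
      · intro hlt n hn
        exact hlt ⟨n, hn⟩ (Finset.mem_univ _)
      · intro hall i _
        exact hall i i.isLt
    have hmeasG : ∀ n : ℕ, μ (τs n ⁻¹' Ioi t) = G t := by
      intro n
      rw [← Measure.map_apply (hmeas n) measurableSet_Ioi, hident n,
        Measure.map_apply hτmeas measurableSet_Ioi]
      rfl
    rw [hset, hindep.meas_biInter (fun n _ => ⟨Ioi t, measurableSet_Ioi, rfl⟩),
      Finset.prod_congr rfl (fun n _ => hmeasG n), Finset.prod_const, Finset.card_range]
  have hmin_meas : ∀ N : ℕ, 1 ≤ N → Measurable (fun ω => ⨅ n : Fin N, τs n ω) := by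
    intro N hN
    haveI : Nonempty (Fin N) := Fin.pos_iff_nonempty.mp hN
    have heq : (fun ω => ⨅ n : Fin N, τs n ω)
        = fun ω => Finset.univ.inf' Finset.univ_nonempty (fun n : Fin N => τs n ω) := by
      ext ω
      rw [Finset.inf'_univ_eq_ciInf]
    rw [heq]
    exact aux_measurable_inf' _ (fun n _ => hmeas n)
  have hmin_nonneg : ∀ N : ℕ, ∀ᵐ ω ∂μ, 0 ≤ ⨅ n : Fin N, τs n ω := by
    intro N
    have hae : ∀ n : ℕ, ∀ᵐ ω ∂μ, 0 ≤ τs n ω := by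
      intro n
      have h0 : μ (τs n ⁻¹' Iio 0) = 0 := by
        rw [← Measure.map_apply (hmeas n) measurableSet_Iio, hident n,
          Measure.map_apply hτmeas measurableSet_Iio]
        have hemp : τ ⁻¹' Iio 0 = ∅ := by
          ext ω
          simp [not_lt.2 (hτnonneg ω)]
        rw [hemp, measure_empty]
      rw [ae_iff]
      refine measure_mono_null ?_ h0
      intro ω hω
      simpa using not_le.mp hω
    have hall : ∀ᵐ ω ∂μ, ∀ n : Fin N, 0 ≤ τs n ω := by
      rw [ae_all_iff]
      exact fun n => hae n
    filter_upwards [hall] with ω hω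
    exact Real.iInf_nonneg hω
  set I : ℕ → ℝ≥0∞ := fun K => ∫⁻ t in Ioi (0:ℝ), G t ^ K * ENNReal.ofReal (t ^ (m-1))
    with hIdef
  have hmbleI : Measurable fun t : ℝ => ENNReal.ofReal (t ^ (m-1)) := by measurability
  have hmble : ∀ K : ℕ, Measurable fun t : ℝ => G t ^ K * ENNReal.ofReal (t ^ (m-1)) :=
    fun K => ((hGmeas.pow_const K).mul hmbleI)
  have hE : ∀ N : ℕ, 1 ≤ N →
      (∫⁻ ω, ENNReal.ofReal ((⨅ n : Fin N, τs n ω) ^ m) ∂μ) = ENNReal.ofReal m * I N := by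
    intro N hN
    have g_intble : ∀ t > (0:ℝ), IntervalIntegrable (fun t => m * t ^ (m-1)) volume 0 t :=
      fun t _ => (intervalIntegral.intervalIntegrable_rpow' (by linarith)).const_mul m
    have g_nn : ∀ᵐ t ∂(volume.restrict (Ioi (0:ℝ))), 0 ≤ m * t ^ (m-1) := by
      filter_upwards [ae_restrict_mem measurableSet_Ioi] with t ht
      have ht' : (0:ℝ) < t := ht
      positivity
    have key := lintegral_comp_eq_lintegral_meas_lt_mul μ (hmin_nonneg N)
      (hmin_meas N hN).aemeasurable g_intble g_nn
    calc ∫⁻ ω, ENNReal.ofReal ((⨅ n : Fin N, τs n ω) ^ m) ∂μ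
        = ∫⁻ ω, ENNReal.ofReal (∫ t in (0:ℝ)..(⨅ n : Fin N, τs n ω), m * t ^ (m-1)) ∂μ := by
          apply lintegral_congr_ae
          filter_upwards [hmin_nonneg N] with ω hω
          congr 1
          rw [intervalIntegral.integral_const_mul, integral_rpow (Or.inl (by linarith)),
            Real.zero_rpow (by rw [sub_add_cancel]; exact hm.ne'), sub_add_cancel]
          field_simp
          simp
      _ = ∫⁻ t in Ioi 0, μ {a | t < ⨅ n : Fin N, τs n a} * ENNReal.ofReal (m * t ^ (m-1)) := key
      _ = ∫⁻ t in Ioi 0, ENNReal.ofReal m * (G t ^ N * ENNReal.ofReal (t ^ (m-1))) := by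
          apply lintegral_congr
          intro t
          rw [htail N hN t, ENNReal.ofReal_mul hm.le]
          ring
      _ = ENNReal.ofReal m * I N := by
          rw [lintegral_const_mul _ (hmble N)]
  set cc : ℕ → ℝ := fun N => (N:ℝ) ^ (-(1/d)) with hccdef
  have hccpos : ∀ N : ℕ, 1 ≤ N → 0 < cc N := by
    intro N hN
    exact Real.rpow_pos_of_pos (by exact_mod_cast hN) _
  have hccd : ∀ N : ℕ, 1 ≤ N → (cc N) ^ d = ((N:ℝ))⁻¹ := by
    intro N hN
    have hNpos : (0:ℝ) < N := by exact_mod_cast hN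
    show ((N:ℝ) ^ (-(1/d))) ^ d = _
    rw [← Real.rpow_mul hNpos.le]
    have he : -(1/d) * d = -1 := by field_simp
    rw [he, Real.rpow_neg_one]
  have hccm : ∀ N : ℕ, 1 ≤ N → (N:ℝ) ^ (m/d) * (cc N) ^ m = 1 := by
    intro N hN
    have hNpos : (0:ℝ) < N := by exact_mod_cast hN
    show (N:ℝ) ^ (m/d) * ((N:ℝ) ^ (-(1/d))) ^ m = 1
    rw [← Real.rpow_mul hNpos.le, ← Real.rpow_add hNpos]
    have he : m/d + -(1/d) * m = 0 := by field_simp; ring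
    rw [he, Real.rpow_zero]
  have hcc0 : Tendsto cc atTop (𝓝 0) := by
    exact (tendsto_rpow_neg_atTop (by positivity)).comp tendsto_natCast_atTop_atTop
  set J : ℕ → ℕ → ℝ≥0∞ :=
    fun K N => ∫⁻ s in Ioi (0:ℝ), G (cc N * s) ^ K * ENNReal.ofReal (s ^ (m-1)) with hJdef
  have hIJ : ∀ K N : ℕ, 1 ≤ N → I K = ENNReal.ofReal ((cc N) ^ m) * J K N := by
    intro K N hN
    have hc := hccpos N hN
    have step := aux_cov (fun t => G t ^ K * ENNReal.ofReal (t ^ (m-1))) (hmble K) hc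
    have step2 : ∫⁻ s in Ioi (0:ℝ), G (cc N * s) ^ K * ENNReal.ofReal ((cc N * s) ^ (m-1))
        = ENNReal.ofReal ((cc N) ^ (m-1)) * J K N := by
      rw [hJdef]
      rw [← lintegral_const_mul' _ _ ENNReal.ofReal_ne_top]
      apply setLIntegral_congr_fun measurableSet_Ioi
      intro s hs
      beta_reduce
      rw [Real.mul_rpow hc.le (le_of_lt hs), ENNReal.ofReal_mul (Real.rpow_nonneg hc.le _)]
      ring
    have hone : ENNReal.ofReal (cc N) * ENNReal.ofReal (cc N)⁻¹ = 1 := by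
      rw [← ENNReal.ofReal_mul hc.le, mul_inv_cancel₀ hc.ne', ENNReal.ofReal_one]
    have hpow : cc N ^ m = cc N * cc N ^ (m-1) := by
      have h3 : (1:ℝ) + (m-1) = m := by ring
      have h4 := Real.rpow_add hc 1 (m-1)
      rw [h3, Real.rpow_one] at h4
      exact h4
    calc I K = (ENNReal.ofReal (cc N) * ENNReal.ofReal (cc N)⁻¹) * I K := by
          rw [hone, one_mul]
      _ = ENNReal.ofReal (cc N) * (ENNReal.ofReal (cc N)⁻¹ * I K) := mul_assoc _ _ _
      _ = ENNReal.ofReal (cc N) *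
            (∫⁻ s in Ioi (0:ℝ), G (cc N * s) ^ K * ENNReal.ofReal ((cc N * s) ^ (m-1))) := by
          rw [step]
      _ = ENNReal.ofReal (cc N) * (ENNReal.ofReal ((cc N) ^ (m-1)) * J K N) := by rw [step2]
      _ = ENNReal.ofReal ((cc N) ^ m) * J K N := by
          rw [← mul_assoc, ← ENNReal.ofReal_mul hc.le, ← hpow]
  have hJI : ∀ K N : ℕ, 1 ≤ N → J K N = ENNReal.ofReal ((N:ℝ) ^ (m/d)) * I K := by
    intro K N hN
    have h1 := hIJ K N hN
    have hone : ENNReal.ofReal ((N:ℝ)^(m/d)) * ENNReal.ofReal ((cc N)^m) = 1 := by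
      rw [← ENNReal.ofReal_mul (Real.rpow_nonneg (Nat.cast_nonneg N) _), hccm N hN,
        ENNReal.ofReal_one]
    calc J K N = (ENNReal.ofReal ((N:ℝ)^(m/d)) * ENNReal.ofReal ((cc N)^m)) * J K N := by
          rw [hone, one_mul]
      _ = ENNReal.ofReal ((N:ℝ)^(m/d)) * (ENNReal.ofReal ((cc N)^m) * J K N) := mul_assoc _ _ _
      _ = ENNReal.ofReal ((N:ℝ)^(m/d)) * I K := by rw [← h1]
  -- pointwise convergence
  have hpt : ∀ s : ℝ, 0 < s → Tendsto (fun N : ℕ => G (cc N * s) ^ N) atTop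
      (𝓝 (ENNReal.ofReal (Real.exp (-(A * s ^ d))))) := by
    intro s hs
    have hAs : 0 < A * s ^ d := by positivity
    have hccs : Tendsto (fun N : ℕ => cc N * s) atTop (𝓝[>] 0) := by
      rw [tendsto_nhdsWithin_iff]
      constructor
      · have h0 := hcc0.mul_const s
        rw [zero_mul] at h0
        exact h0
      · filter_upwards [eventually_ge_atTop 1] with N hN
        exact mul_pos (hccpos N hN) hs
    have hratio : Tendsto (fun N : ℕ => F (cc N * s) / (A * (cc N * s) ^ d)) atTop (𝓝 1) :=
      hshort.comp hccs
    have hNx : Tendsto (fun N : ℕ => (N:ℝ) * F (cc N * s)) atTop (𝓝 (A * s ^ d)) := by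
      have h1 := hratio.mul_const (A * s ^ d)
      rw [one_mul] at h1
      apply h1.congr'
      filter_upwards [eventually_ge_atTop 1] with N hN
      have hc := hccpos N hN
      have hNpos : (0:ℝ) < N := by exact_mod_cast hN
      have hsd : (0:ℝ) < s ^ d := Real.rpow_pos_of_pos hs d
      have hcs : (cc N * s) ^ d = (N:ℝ)⁻¹ * s ^ d := by
        rw [Real.mul_rpow hc.le hs.le, hccd N hN]
      rw [hcs]
      field_simp
    have key := aux_one_sub_pow (x := fun N => F (cc N * s)) (fun N => hF0 _) hAs hNx
    have key2 := ENNReal.tendsto_ofReal key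
    apply key2.congr
    intro N
    rw [hG_eq (cc N * s)]
    exact ENNReal.ofReal_pow (sub_nonneg.2 (hF1 _)) N
  -- lower bound on F near 0
  obtain ⟨t₀, ht₀pos, ht₀⟩ : ∃ t₀ > (0:ℝ), ∀ t, 0 < t → t ≤ t₀ → A/2 * t ^ d ≤ F t := by
    have h2 : ∀ᶠ t in 𝓝[>] (0:ℝ), (1:ℝ)/2 < F t / (A * t ^ d) :=
      hshort.eventually (eventually_gt_nhds (by norm_num))
    rw [eventually_nhdsWithin_iff] at h2
    obtain ⟨ε, hε, hball⟩ := Metric.eventually_nhds_iff.mp h2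
    refine ⟨ε/2, by positivity, fun t ht htle => ?_⟩
    have hd1 := hball (y := t)
      (show dist t 0 < ε by rw [Real.dist_eq, sub_zero, abs_of_pos ht]; linarith) ht
    have hAt : 0 < A * t ^ d := by positivity
    rw [lt_div_iff₀ hAt] at hd1
    linarith
  set r : ℝ := 1 - F t₀ with hrdef
  have hr0 : 0 ≤ r := sub_nonneg.2 (hF1 t₀)
  have hr1 : r < 1 := by
    have h1 := ht₀ t₀ ht₀pos le_rfl
    have h2 : (0:ℝ) < A/2 * t₀ ^ d := by positivity
    have : 0 < F t₀ := lt_of_lt_of_le h2 h1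
    simp only [hrdef]
    linarith
  have hGt₀ : G t₀ = ENNReal.ofReal r := hG_eq t₀
  set φ : ℝ → ℝ := fun s => s ^ (m-1) * Real.exp (-A * s ^ d) with hφdef
  set ψ : ℝ → ℝ := fun s => s ^ (m-1) * Real.exp (-(A/2) * s ^ d) with hψdef
  have hφint : IntegrableOn φ (Ioi 0) :=
    integrableOn_rpow_mul_exp_neg_mul_rpow (by linarith) hd0 hA
  have hψint : IntegrableOn ψ (Ioi 0) :=
    integrableOn_rpow_mul_exp_neg_mul_rpow (by linarith) hd0 (by linarith)
  set Jlim : ℝ≥0∞ :=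
    ∫⁻ s in Ioi (0:ℝ), ENNReal.ofReal (Real.exp (-(A * s ^ d))) * ENNReal.ofReal (s ^ (m-1))
    with hJlimdef
  have hφnn : 0 ≤ᵐ[volume.restrict (Ioi (0:ℝ))] φ := by
    filter_upwards [ae_restrict_mem measurableSet_Ioi] with s hs
    have hs' : (0:ℝ) < s := hs
    simp only [hφdef]
    positivity
  have hJlim_eq : Jlim = ENNReal.ofReal (∫ s in Ioi (0:ℝ), φ s) := by
    calc Jlim = ∫⁻ s in Ioi (0:ℝ), ENNReal.ofReal (φ s) := by
          apply lintegral_congr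
          intro s
          rw [← ENNReal.ofReal_mul (Real.exp_nonneg _)]
          congr 1
          simp only [hφdef]
          rw [neg_mul, mul_comm]
      _ = ENNReal.ofReal (∫ s in Ioi (0:ℝ), φ s) :=
          (ofReal_integral_eq_lintegral_ofReal hφint hφnn).symm
  have hJlim_ne_top : Jlim ≠ ∞ := by
    rw [hJlim_eq]; exact ENNReal.ofReal_ne_top
  have hval : m * (∫ s in Ioi (0:ℝ), φ s) = Real.Gamma (1 + m/d) / A ^ (m/d) := by
    have h2 := integral_rpow_mul_exp_neg_mul_rpow hd0 (by linarith : (-1:ℝ) < m - 1) hA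
    simp only [hφdef]
    rw [h2, show m - 1 + 1 = m from by ring, show (1:ℝ) + m/d = m/d + 1 from by ring,
      Real.Gamma_add_one (div_pos hm hd0).ne', neg_div, Real.rpow_neg hA.le]
    ring
  -- domination for the truncated part
  set h : ℕ → ℝ → ℝ≥0∞ := fun N s =>
    if cc N * s ≤ t₀ then G (cc N * s) ^ N * ENNReal.ofReal (s ^ (m-1)) else 0 with hhdef
  have hhm : ∀ N, Measurable (h N) := fun N =>
    Measurable.ite (measurableSet_le (measurable_const_mul _) measurable_const)
      (((hGmeas.comp (measurable_const_mul _)).pow_const N).mul hmbleI) measurable_const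
  have hmain : Tendsto (fun N => ∫⁻ s in Ioi (0:ℝ), h N s) atTop (𝓝 Jlim) := by
    rw [hJlimdef]
    have hψnn : 0 ≤ᵐ[volume.restrict (Ioi (0:ℝ))] ψ := by
      filter_upwards [ae_restrict_mem measurableSet_Ioi] with s hs
      have hs' : (0:ℝ) < s := hs
      simp only [hψdef]
      positivity
    have hbfin : (∫⁻ s in Ioi (0:ℝ), ENNReal.ofReal (ψ s)) ≠ ∞ := by
      rw [← ofReal_integral_eq_lintegral_ofReal hψint hψnn]
      exact ENNReal.ofReal_ne_top
    have hdct : Tendsto (fun k : ℕ => ∫⁻ s in Ioi (0:ℝ), h (k+1) s) atTop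
        (𝓝 (∫⁻ s in Ioi (0:ℝ),
          ENNReal.ofReal (Real.exp (-(A * s ^ d))) * ENNReal.ofReal (s ^ (m-1)))) := by
      apply tendsto_lintegral_of_dominated_convergence (fun s => ENNReal.ofReal (ψ s))
        (fun k => hhm (k+1)) ?_ hbfin ?_
      · intro k
        filter_upwards [ae_restrict_mem measurableSet_Ioi] with s hs
        have hs' : (0:ℝ) < s := hs
        have hN1 : 1 ≤ k + 1 := Nat.le_add_left 1 k
        by_cases hcs : cc (k+1) * s ≤ t₀
        · simp only [hhdef, if_pos hcs]
          have hcpos := hccpos (k+1) hN1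
          have hcspos : 0 < cc (k+1) * s := mul_pos hcpos hs'
          have hFlb := ht₀ _ hcspos hcs
          have hcsd : (cc (k+1) * s) ^ d = (((k:ℕ)+1:ℕ):ℝ)⁻¹ * s ^ d := by
            rw [Real.mul_rpow hcpos.le hs'.le, hccd (k+1) hN1]
          rw [hcsd] at hFlb
          have hNne : ((((k:ℕ)+1:ℕ)):ℝ) ≠ 0 := Nat.cast_ne_zero.2 (Nat.succ_ne_zero k)
          have hGle : G (cc (k+1) * s)
              ≤ ENNReal.ofReal (Real.exp (-(A/2) * s ^ d / ((((k:ℕ)+1:ℕ)):ℝ))) := by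
            rw [hG_eq]
            apply ENNReal.ofReal_le_ofReal
            have hexp := Real.add_one_le_exp (-(A/2) * s^d / ((((k:ℕ)+1:ℕ)):ℝ))
            have heq : -(A/2) * s^d / ((((k:ℕ)+1:ℕ)):ℝ)
                = -(A/2 * (((((k:ℕ)+1:ℕ)):ℝ)⁻¹ * s^d)) := by
              field_simp
            linarith [hFlb]
          calc G (cc (k+1) * s) ^ (k+1) * ENNReal.ofReal (s ^ (m-1))
              ≤ ENNReal.ofReal (Real.exp (-(A/2) * s ^ d / ((((k:ℕ)+1:ℕ)):ℝ))) ^ (k+1) *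
                  ENNReal.ofReal (s ^ (m-1)) := by
                gcongr
            _ = ENNReal.ofReal (ψ s) := by
                rw [← ENNReal.ofReal_pow (Real.exp_nonneg _), ← Real.exp_nat_mul,
                  ← ENNReal.ofReal_mul (Real.exp_nonneg _)]
                congr 1
                have harg : ((((k:ℕ)+1:ℕ)):ℝ) * (-(A/2) * s^d / ((((k:ℕ)+1:ℕ)):ℝ))
                    = -(A/2) * s^d := by
                  field_simp
                simp only [hψdef]
                rw [harg, mul_comm]
        · simp only [hhdef, if_neg hcs]
          exact zero_le
      · filter_upwards [ae_restrict_mem measurableSet_Ioi] with s hs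
        have hs' : (0:ℝ) < s := hs
        have base : Tendsto (fun N : ℕ => G (cc N * s) ^ N * ENNReal.ofReal (s ^ (m-1))) atTop
            (𝓝 (ENNReal.ofReal (Real.exp (-(A * s ^ d))) * ENNReal.ofReal (s ^ (m-1)))) :=
          ENNReal.Tendsto.mul_const (hpt s hs')
            (Or.inl (ENNReal.ofReal_pos.2 (Real.exp_pos _)).ne')
        have hev : ∀ᶠ N : ℕ in atTop,
            h N s = G (cc N * s) ^ N * ENNReal.ofReal (s ^ (m-1)) := by
          have h0 := hcc0.mul_const s
          rw [zero_mul] at h0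
          filter_upwards [h0.eventually (eventually_lt_nhds ht₀pos)] with N hN
          simp only [hhdef, if_pos hN.le]
        have hfull : Tendsto (fun N : ℕ => h N s) atTop
            (𝓝 (ENNReal.ofReal (Real.exp (-(A * s ^ d))) * ENNReal.ofReal (s ^ (m-1)))) :=
          base.congr' (hev.mono fun N e => e.symm)
        exact hfull.comp (tendsto_add_atTop_nat 1)
    exact (tendsto_add_atTop_iff_nat 1).mp hdct
  set tailf : ℕ → ℝ → ℝ≥0∞ := fun N s =>
    if cc N * s ≤ t₀ then 0 else G (cc N * s) ^ N * ENNReal.ofReal (s ^ (m-1)) with htaildef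
  have hhm : ∀ N, Measurable (h N) := fun N =>
    Measurable.ite (measurableSet_le (measurable_const_mul _) measurable_const)
      (((hGmeas.comp (measurable_const_mul _)).pow_const N).mul hmbleI) measurable_const
  have hsplit : ∀ N, J N N = (∫⁻ s in Ioi (0:ℝ), h N s) + ∫⁻ s in Ioi (0:ℝ), tailf N s := by
    intro N
    rw [← lintegral_add_left (hhm N)]
    apply lintegral_congr
    intro s
    simp only [hhdef, htaildef]
    split_ifs with hcs
    · rw [add_zero]
    · rw [zero_add]
  have hIfin : I N₁ ≠ ∞ := by
    have hEfin := hN₀ N₁ hN₁0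
    rw [hE N₁ hN₁1] at hEfin
    intro hI
    rw [hI, ENNReal.mul_top (by simp [ENNReal.ofReal_eq_zero, not_le, hm])] at hEfin
    exact hEfin rfl
  have htail0 : Tendsto (fun N => ∫⁻ s in Ioi (0:ℝ), tailf N s) atTop (𝓝 0) := by
    set C : ℝ := (I N₁).toReal with hCdef
    have hC0 : 0 ≤ C := ENNReal.toReal_nonneg
    have hIC : I N₁ = ENNReal.ofReal C := (ENNReal.ofReal_toReal hIfin).symm
    have hbound : ∀ᶠ N in atTop, (∫⁻ s in Ioi (0:ℝ), tailf N s)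
        ≤ ENNReal.ofReal (r ^ (N - N₁) * ((N:ℝ) ^ (m/d) * C)) := by
      filter_upwards [eventually_ge_atTop N₁] with N hN
      have h1 : 1 ≤ N := le_trans hN₁1 hN
      have step1 : (∫⁻ s in Ioi (0:ℝ), tailf N s) ≤ ENNReal.ofReal r ^ (N - N₁) * J N₁ N := by
        calc (∫⁻ s in Ioi (0:ℝ), tailf N s)
            ≤ ∫⁻ s in Ioi (0:ℝ), ENNReal.ofReal r ^ (N - N₁) *
                (G (cc N * s) ^ N₁ * ENNReal.ofReal (s ^ (m-1))) := by
              refine lintegral_mono_ae ?_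
              filter_upwards [ae_restrict_mem measurableSet_Ioi] with s _
              by_cases hcs : cc N * s ≤ t₀
              · simp only [htaildef, if_pos hcs]
                exact zero_le
              · simp only [htaildef, if_neg hcs]
                have hG1 : G (cc N * s) ≤ ENNReal.ofReal r := by
                  rw [← hGt₀]
                  exact hGanti (le_of_lt (not_le.mp hcs))
                calc G (cc N * s) ^ N * ENNReal.ofReal (s ^ (m-1))
                    = (G (cc N * s) ^ (N - N₁) * G (cc N * s) ^ N₁) *
                        ENNReal.ofReal (s ^ (m-1)) := by
                      rw [← pow_add, Nat.sub_add_cancel hN]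
                  _ ≤ (ENNReal.ofReal r ^ (N - N₁) * G (cc N * s) ^ N₁) *
                        ENNReal.ofReal (s ^ (m-1)) := by
                      gcongr
                  _ = ENNReal.ofReal r ^ (N - N₁) *
                        (G (cc N * s) ^ N₁ * ENNReal.ofReal (s ^ (m-1))) := by
                      ring
          _ = ENNReal.ofReal r ^ (N - N₁) * J N₁ N := by
              rw [lintegral_const_mul' _ _ (ENNReal.pow_ne_top ENNReal.ofReal_ne_top)]
      calc (∫⁻ s in Ioi (0:ℝ), tailf N s) ≤ ENNReal.ofReal r ^ (N - N₁) * J N₁ N := step1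
        _ = ENNReal.ofReal r ^ (N - N₁) *
              (ENNReal.ofReal ((N:ℝ) ^ (m/d)) * ENNReal.ofReal C) := by
            rw [hJI N₁ N h1, hIC]
        _ = ENNReal.ofReal (r ^ (N - N₁) * ((N:ℝ) ^ (m/d) * C)) := by
            rw [ENNReal.ofReal_mul (pow_nonneg hr0 _),
              ENNReal.ofReal_mul (Real.rpow_nonneg (Nat.cast_nonneg N) _),
              ENNReal.ofReal_pow hr0]
    set r' : ℝ := max r (1/2) with hr'def
    have hr'0 : (0:ℝ) < r' := lt_of_lt_of_le (by norm_num) (le_max_right _ _)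
    have hr'1 : r' < 1 := max_lt hr1 (by norm_num)
    have hrr' : r ≤ r' := le_max_left _ _
    have hb' : 0 < -Real.log r' := by
      have := Real.log_neg hr'0 hr'1
      linarith
    have hrN : ∀ N : ℕ, r' ^ N = Real.exp (-(-Real.log r') * N) := by
      intro N
      rw [show -(-Real.log r') * (N:ℝ) = (N:ℝ) * Real.log r' from by ring,
        Real.exp_nat_mul, Real.exp_log hr'0]
    have hu : Tendsto (fun N : ℕ => (C / r' ^ N₁) * ((N:ℝ) ^ (m/d) * r' ^ N)) atTop (𝓝 0) := by
      have hw := (tendsto_rpow_mul_exp_neg_mul_atTop_nhds_zero (m/d) (-Real.log r') hb').comp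
        tendsto_natCast_atTop_atTop
      have hw2 := hw.const_mul (C / r' ^ N₁)
      rw [mul_zero] at hw2
      apply hw2.congr
      intro N
      simp only [Function.comp]
      rw [hrN N]
    have hv : Tendsto (fun N : ℕ => r ^ (N - N₁) * ((N:ℝ) ^ (m/d) * C)) atTop (𝓝 0) := by
      apply squeeze_zero' (g := fun N : ℕ => (C / r' ^ N₁) * ((N:ℝ) ^ (m/d) * r' ^ N))
      · filter_upwards with N
        exact mul_nonneg (pow_nonneg hr0 _)
          (mul_nonneg (Real.rpow_nonneg (Nat.cast_nonneg _) _) hC0)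
      · filter_upwards [eventually_ge_atTop N₁] with N hN
        have e1 : r ^ (N - N₁) ≤ r' ^ (N - N₁) := pow_le_pow_left₀ hr0 hrr' _
        calc r ^ (N - N₁) * ((N:ℝ) ^ (m/d) * C) ≤ r' ^ (N - N₁) * ((N:ℝ) ^ (m/d) * C) := by
              exact mul_le_mul_of_nonneg_right e1
                (mul_nonneg (Real.rpow_nonneg (Nat.cast_nonneg _) _) hC0)
          _ = (C / r' ^ N₁) * ((N:ℝ) ^ (m/d) * r' ^ N) := by
              rw [pow_sub₀ _ hr'0.ne' hN]
              ring
      · exact hu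
    have hlim0 : Tendsto (fun N : ℕ => ENNReal.ofReal (r ^ (N - N₁) * ((N:ℝ) ^ (m/d) * C)))
        atTop (𝓝 0) := by
      have := ENNReal.tendsto_ofReal hv
      rwa [ENNReal.ofReal_zero] at this
    exact tendsto_of_tendsto_of_tendsto_of_le_of_le' tendsto_const_nhds hlim0
      (Eventually.of_forall fun N => zero_le) hbound
  have hJJ : Tendsto (fun N => J N N) atTop (𝓝 Jlim) := by
    have := hmain.add htail0
    rw [add_zero] at this
    exact this.congr fun N => (hsplit N).symm
  have hJt : Tendsto (fun N => m * (J N N).toReal) atTop (𝓝 (m * Jlim.toReal)) :=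
    ((ENNReal.tendsto_toReal hJlim_ne_top).comp hJJ).const_mul m
  have hfinal_val : m * Jlim.toReal = Real.Gamma (1 + m/d) / A ^ (m/d) := by
    rw [hJlim_eq, ENNReal.toReal_ofReal, hval]
    exact setIntegral_nonneg measurableSet_Ioi fun s hs => by
      have : (0:ℝ) < s := hs
      positivity
  rw [hfinal_val] at hJt
  apply hJt.congr'
  filter_upwards [eventually_ge_atTop N₁] with N hN
  have h1 : 1 ≤ N := le_trans hN₁1 hN
  rw [hE N h1, hIJ N N h1, ENNReal.toReal_mul, ENNReal.toReal_mul,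
    ENNReal.toReal_ofReal hm.le, ENNReal.toReal_ofReal (Real.rpow_nonneg (hccpos N h1).le m)]
  have h2 := hccm N h1
  linear_combination (-(m * (J N N).toReal)) * h2
end

section
/- For d ≥ 1 and rates r₁, ..., r_d > 0, if E₁, ..., E_d are independent exponential random variables with rates R₁, ..., R_d ≥ r_k respectively (R_k being total exit rates), then P(E₁ + ... + E_d ≤ t) · Π_k (r_k/R_k) ~ (Π_k r_k) t^d / d! as t → 0+, provided each jump chooses the prescribed transition with probability r_k/R_k. -/
open MeasureTheory ProbabilityTheory Filter
open scoped ENNReal Topology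

open Set

-- integral helper
lemma my_integral_Icc_pow (d : ℕ) {t : ℝ} (ht : 0 ≤ t) (c : ℝ) :
    ∫ y in Icc (0:ℝ) t, c * (t - y) ^ d = c * (t ^ (d+1) / (d+1)) := by
  rw [MeasureTheory.integral_Icc_eq_integral_Ioc, ← intervalIntegral.integral_of_le ht,
    intervalIntegral.integral_const_mul,
    intervalIntegral.integral_comp_sub_left (fun y => y ^ d) t]
  simp [integral_pow]

lemma my_iIndepFun_comp_right {Ω ι ι' β : Type*} [MeasurableSpace Ω] {μ : Measure Ω}
    [IsProbabilityMeasure μ] {m : MeasurableSpace β} {f : ι → Ω → β}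
    (h : iIndepFun (m := fun _ => m) f μ) (g : ι' → ι) (hg : Function.Injective g) :
    iIndepFun (m := fun _ => m) (fun i => f (g i)) μ := by
  rw [ProbabilityTheory.iIndepFun_iff_measure_inter_preimage_eq_mul] at h ⊢
  intro S sets hsets
  classical
  set sets' : ι → Set β := Function.extend g sets (fun _ => Set.univ) with hsets'
  have hext : ∀ j, sets' (g j) = sets j := fun j => hg.extend_apply _ _ _
  have := h (S.map ⟨g, hg⟩) (sets := sets') ?_
  · rw [Finset.prod_map] at this
    rw [show (⋂ i ∈ Finset.map ⟨g, hg⟩ S, f i ⁻¹' sets' i) = ⋂ i ∈ S, f (g i) ⁻¹' sets' (g i) by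
      simp [Set.iInter_comm]] at this
    simp only [Function.Embedding.coeFn_mk, hext] at this
    exact this
  · intro i hi
    simp only [Finset.mem_map, Function.Embedding.coeFn_mk] at hi
    obtain ⟨j, hj, rfl⟩ := hi
    rw [hext]
    exact hsets j hj

lemma my_sum_exp_bounds {Ω : Type*} [MeasurableSpace Ω] (μ : Measure Ω) [IsProbabilityMeasure μ] :
    ∀ (d : ℕ) (R : Fin d → ℝ), (∀ k, 0 < R k) → ∀ (E : Fin d → Ω → ℝ), (∀ k, Measurable (E k)) →
    iIndepFun E μ →
    (∀ k, ∀ t : ℝ, 0 ≤ t → μ {ω | E k ω ≤ t} = ENNReal.ofReal (1 - Real.exp (-(R k) * t))) →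
    ∀ t : ℝ,
      (t < 0 → μ {ω | (∑ k, E k ω) ≤ t} = 0) ∧
      (0 ≤ t →
        ENNReal.ofReal ((∏ k, R k) * Real.exp (-(∑ k, R k) * t) * t ^ d / d.factorial)
            ≤ μ {ω | (∑ k, E k ω) ≤ t} ∧
        μ {ω | (∑ k, E k ω) ≤ t} ≤ ENNReal.ofReal ((∏ k, R k) * t ^ d / d.factorial)) := by
  intro d
  induction d with
  | zero =>
    intro R hR E hmeas hindep hexp t
    constructor
    · intro ht
      have h0 : {ω : Ω | (0:ℝ) ≤ t} = ∅ := by ext ω; simpa using not_le.2 ht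
      simp [h0]
    · intro ht
      have h0 : {ω : Ω | (0:ℝ) ≤ t} = Set.univ := by ext ω; simpa using ht
      simp [h0]
  | succ d ih =>
    intro R hR E hmeas hindep hexp t
    classical
    set Rl := R (Fin.last d) with hRldef
    have hRl : 0 < Rl := hR _
    set Y := E (Fin.last d) with hYdef
    set S : Ω → ℝ := fun ω => ∑ k : Fin d, E (Fin.castSucc k) ω with hSdef
    have hSmeas : Measurable S := by
      apply Finset.measurable_sum
      exact fun k _ => hmeas _
    have hYmeas : Measurable Y := hmeas _
    have hindep' := my_iIndepFun_comp_right hindep Fin.castSucc (Fin.castSucc_injective d)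
    have IH := ih (fun k => R (Fin.castSucc k)) (fun k => hR _) (fun k => E (Fin.castSucc k))
        (fun k => hmeas _) hindep' (fun k => hexp _)
    have hset : ∀ u : ℝ, {ω | (∑ k, E k ω) ≤ u} = {ω | S ω + Y ω ≤ u} := by
      intro u; ext ω
      simp only [Set.mem_setOf_eq, hSdef, hYdef]
      rw [Fin.sum_univ_castSucc]
    have hSY : IndepFun S Y μ := by
      have h1 : IndepFun
          (∑ j ∈ Finset.map ⟨Fin.castSucc, Fin.castSucc_injective d⟩ Finset.univ, E j) Y μ := by
        apply hindep.indepFun_finsetSum_of_notMem hmeas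
        simp only [Finset.mem_map, Finset.mem_univ, Function.Embedding.coeFn_mk, true_and]
        rintro ⟨k, hk⟩
        exact (Fin.castSucc_lt_last k).ne hk
      have h2 : (∑ j ∈ Finset.map ⟨Fin.castSucc, Fin.castSucc_injective d⟩ Finset.univ, E j) = S := by
        ext ω
        simp [Finset.sum_apply, hSdef]
      rwa [h2] at h1
    haveI : IsProbabilityMeasure (μ.map Y) := Measure.isProbabilityMeasure_map hYmeas.aemeasurable
    have hmap : μ.map (fun ω => (Y ω, S ω)) = (μ.map Y).prod (μ.map S) :=
      (ProbabilityTheory.indepFun_iff_map_prod_eq_prod_map_map hYmeas.aemeasurable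
        hSmeas.aemeasurable).1 hSY.symm
    have hlawY : μ.map Y = ProbabilityTheory.expMeasure Rl := by
      haveI := ProbabilityTheory.isProbabilityMeasure_expMeasure hRl
      refine Measure.ext_of_Iic (μ.map Y) _ (fun a => ?_)
      rw [Measure.map_apply hYmeas measurableSet_Iic]
      have hE : (ProbabilityTheory.expMeasure Rl) (Iic a)
          = ENNReal.ofReal (if 0 ≤ a then 1 - Real.exp (-(Rl * a)) else 0) := by
        have : ProbabilityTheory.expMeasure Rl = volume.withDensity
            (ProbabilityTheory.exponentialPDF Rl) := rfl
        rw [this, withDensity_apply _ measurableSet_Iic,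
          ProbabilityTheory.lintegral_exponentialPDF_eq_antiDeriv hRl a]
      rw [hE]
      by_cases ha : 0 ≤ a
      · rw [if_pos ha, show Y ⁻¹' Iic a = {ω | Y ω ≤ a} from rfl, hexp _ a ha, neg_mul]
      · rw [if_neg ha]
        push_neg at ha
        have h0 : μ (Y ⁻¹' Iic a) ≤ μ {ω | Y ω ≤ 0} :=
          measure_mono (fun ω (h : Y ω ≤ a) => le_of_lt (lt_of_le_of_lt h ha))
        rw [hexp _ 0 le_rfl] at h0
        simpa using le_antisymm (by simpa using h0) zero_le
    have gmeas : ∀ u : ℝ, Measurable (fun y : ℝ => μ {ω | S ω ≤ u - y}) := by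
      intro u
      apply Antitone.measurable
      intro y y' hyy'
      exact measure_mono (fun ω (h : S ω ≤ u - y') => h.trans (by linarith))
    have key : ∀ u : ℝ, μ {ω | S ω + Y ω ≤ u}
        = ∫⁻ y, ProbabilityTheory.exponentialPDF Rl y * μ {ω | S ω ≤ u - y} := by
      intro u
      have hms : MeasurableSet {p : ℝ × ℝ | p.2 + p.1 ≤ u} :=
        measurableSet_le (by fun_prop) measurable_const
      have h1 : {ω | S ω + Y ω ≤ u} = (fun ω => (Y ω, S ω)) ⁻¹' {p | p.2 + p.1 ≤ u} := rfl
      rw [h1, ← Measure.map_apply (hYmeas.prodMk hSmeas) hms, hmap, Measure.prod_apply hms]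
      have h2 : ∀ y : ℝ, (Prod.mk y ⁻¹' {p : ℝ × ℝ | p.2 + p.1 ≤ u}) = Iic (u - y) := by
        intro y; ext x
        simp [le_sub_iff_add_le]
      simp_rw [h2]
      have h3 : ∀ y : ℝ, (μ.map S) (Iic (u - y)) = μ {ω | S ω ≤ u - y} := by
        intro y
        rw [Measure.map_apply hSmeas measurableSet_Iic]; rfl
      simp_rw [h3]
      have hpdfmeas : Measurable (ProbabilityTheory.exponentialPDF Rl) := by
        unfold ProbabilityTheory.exponentialPDF
        exact (ProbabilityTheory.measurable_exponentialPDFReal Rl).ennreal_ofReal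
      rw [hlawY, show ProbabilityTheory.expMeasure Rl = volume.withDensity
          (ProbabilityTheory.exponentialPDF Rl) from rfl,
        lintegral_withDensity_eq_lintegral_mul _ hpdfmeas (gmeas u)]
      rfl
    have hpdfmeas : Measurable (ProbabilityTheory.exponentialPDF Rl) := by
      unfold ProbabilityTheory.exponentialPDF
      exact (ProbabilityTheory.measurable_exponentialPDFReal Rl).ennreal_ofReal
    set C : ℝ := ∏ k : Fin d, R (Fin.castSucc k) with hCdef
    set Sd : ℝ := ∑ k : Fin d, R (Fin.castSucc k) with hSddef
    have hC : 0 < C := Finset.prod_pos (fun k _ => hR _)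
    have hSd : 0 ≤ Sd := Finset.sum_nonneg (fun k _ => (hR _).le)
    have hdfac : (0:ℝ) < d.factorial := by positivity
    have hprodsucc : (∏ k : Fin (d+1), R k) = C * Rl := by
      rw [Fin.prod_univ_castSucc, hCdef]
    have hsumsucc : (∑ k : Fin (d+1), R k) = Sd + Rl := by
      rw [Fin.sum_univ_castSucc, hSddef]
    have IH1 : ∀ u : ℝ, u < 0 → μ {ω | S ω ≤ u} = 0 := fun u hu => (IH u).1 hu
    have IH2 : ∀ u : ℝ, 0 ≤ u →
        ENNReal.ofReal (C * Real.exp (-Sd * u) * u ^ d / d.factorial) ≤ μ {ω | S ω ≤ u} ∧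
        μ {ω | S ω ≤ u} ≤ ENNReal.ofReal (C * u ^ d / d.factorial) := fun u hu => (IH u).2 hu
    constructor
    · -- t < 0
      intro ht
      rw [hset, key]
      rw [show (fun y => ProbabilityTheory.exponentialPDF Rl y * μ {ω | S ω ≤ t - y})
          = fun _ => (0:ℝ≥0∞) from funext fun y => ?_, lintegral_zero]
      rcases lt_or_ge y 0 with hy | hy
      · rw [ProbabilityTheory.exponentialPDF_of_neg hy, zero_mul]
      · rw [IH1 (t - y) (by linarith), mul_zero]
    · intro ht
      have hc1 : (0:ℝ) ≤ Rl * C / d.factorial := by positivity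
      have hupper : μ {ω | S ω + Y ω ≤ t}
          ≤ ENNReal.ofReal ((∏ k : Fin (d+1), R k) * t ^ (d+1) / (d+1).factorial) := by
        rw [key]
        have hptw : ∀ y : ℝ, ProbabilityTheory.exponentialPDF Rl y * μ {ω | S ω ≤ t - y}
            ≤ (Icc (0:ℝ) t).indicator
              (fun y => ENNReal.ofReal ((Rl * C / d.factorial) * (t - y) ^ d)) y := by
          intro y
          rcases lt_or_ge y 0 with hy | hy
          · rw [ProbabilityTheory.exponentialPDF_of_neg hy, zero_mul]; positivity
          rcases le_or_gt y t with hyt | hyt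
          · rw [Set.indicator_of_mem (Set.mem_Icc.2 ⟨hy, hyt⟩)]
            have h1 : ProbabilityTheory.exponentialPDF Rl y ≤ ENNReal.ofReal Rl := by
              rw [ProbabilityTheory.exponentialPDF_of_nonneg hy]
              apply ENNReal.ofReal_le_ofReal
              have he : Real.exp (-(Rl * y)) ≤ 1 :=
                Real.exp_le_one_iff.2 (neg_nonpos.2 (mul_nonneg hRl.le hy))
              nlinarith
            have h2 := (IH2 (t - y) (by linarith)).2
            calc ProbabilityTheory.exponentialPDF Rl y * μ {ω | S ω ≤ t - y}
                ≤ ENNReal.ofReal Rl * ENNReal.ofReal (C * (t - y) ^ d / d.factorial) :=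
                  mul_le_mul' h1 h2
              _ = ENNReal.ofReal (Rl * (C * (t - y) ^ d / d.factorial)) :=
                  (ENNReal.ofReal_mul hRl.le).symm
              _ = ENNReal.ofReal ((Rl * C / d.factorial) * (t - y) ^ d) := by
                  congr 1; ring
          · rw [IH1 (t - y) (by linarith), mul_zero]; positivity
        have hint : IntegrableOn (fun y : ℝ => (Rl * C / d.factorial) * (t - y) ^ d)
            (Icc (0:ℝ) t) := by
          exact (continuous_const.mul ((continuous_const.sub continuous_id).pow d)).integrableOn_Icc
        have hnn : 0 ≤ᵐ[volume.restrict (Icc (0:ℝ) t)]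
            fun y : ℝ => (Rl * C / d.factorial) * (t - y) ^ d := by
          refine (ae_restrict_iff' measurableSet_Icc).2 (ae_of_all _ fun y hy => ?_)
          exact mul_nonneg hc1 (pow_nonneg (by linarith [hy.2]) d)
        calc ∫⁻ y, ProbabilityTheory.exponentialPDF Rl y * μ {ω | S ω ≤ t - y}
            ≤ ∫⁻ y, (Icc (0:ℝ) t).indicator
              (fun y => ENNReal.ofReal ((Rl * C / d.factorial) * (t - y) ^ d)) y :=
              lintegral_mono hptw
          _ = ∫⁻ y in Icc (0:ℝ) t, ENNReal.ofReal ((Rl * C / d.factorial) * (t - y) ^ d) :=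
              lintegral_indicator measurableSet_Icc _
          _ = ENNReal.ofReal (∫ y in Icc (0:ℝ) t, (Rl * C / d.factorial) * (t - y) ^ d) :=
              (ofReal_integral_eq_lintegral_ofReal hint hnn).symm
          _ = ENNReal.ofReal ((Rl * C / d.factorial) * (t ^ (d+1) / (d+1))) := by
              rw [my_integral_Icc_pow d ht]
          _ = ENNReal.ofReal ((∏ k : Fin (d+1), R k) * t ^ (d+1) / (d+1).factorial) := by
              congr 1
              rw [hprodsucc, Nat.factorial_succ]
              push_cast
              field_simp
      have hexpt : (0:ℝ) < Real.exp (-(Sd + Rl) * t) := Real.exp_pos _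
      have hc2 : (0:ℝ) ≤ Rl * C * Real.exp (-(Sd + Rl) * t) / d.factorial := by positivity
      have hlower : ENNReal.ofReal
            ((∏ k : Fin (d+1), R k) * Real.exp (-(∑ k : Fin (d+1), R k) * t) * t ^ (d+1)
              / (d+1).factorial)
          ≤ μ {ω | S ω + Y ω ≤ t} := by
        rw [key]
        have hexpmul : Real.exp (-(Rl * t)) * Real.exp (-Sd * t) = Real.exp (-(Sd + Rl) * t) := by
          rw [← Real.exp_add]; ring_nf
        have hptw : ∀ y ∈ Icc (0:ℝ) t,
            ENNReal.ofReal ((Rl * C * Real.exp (-(Sd + Rl) * t) / d.factorial) * (t - y) ^ d)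
              ≤ ProbabilityTheory.exponentialPDF Rl y * μ {ω | S ω ≤ t - y} := by
          rintro y ⟨hy0, hyt⟩
          have h1 : ENNReal.ofReal (Rl * Real.exp (-(Rl * t)))
              ≤ ProbabilityTheory.exponentialPDF Rl y := by
            rw [ProbabilityTheory.exponentialPDF_of_nonneg hy0]
            exact ENNReal.ofReal_le_ofReal (mul_le_mul_of_nonneg_left
              (Real.exp_le_exp.2 (by nlinarith)) hRl.le)
          have h2 : ENNReal.ofReal (C * Real.exp (-Sd * t) * (t - y) ^ d / d.factorial)
              ≤ μ {ω | S ω ≤ t - y} := by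
            refine le_trans (ENNReal.ofReal_le_ofReal ?_) (IH2 (t - y) (by linarith)).1
            have hee : Real.exp (-Sd * t) ≤ Real.exp (-Sd * (t - y)) :=
              Real.exp_le_exp.2 (by nlinarith)
            have hpn : (0:ℝ) ≤ (t - y) ^ d := pow_nonneg (by linarith) d
            gcongr
          calc ENNReal.ofReal ((Rl * C * Real.exp (-(Sd + Rl) * t) / d.factorial) * (t - y) ^ d)
              = ENNReal.ofReal (Rl * Real.exp (-(Rl * t)))
                * ENNReal.ofReal (C * Real.exp (-Sd * t) * (t - y) ^ d / d.factorial) := by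
                rw [← ENNReal.ofReal_mul (by positivity)]
                congr 1
                rw [← hexpmul]; ring
            _ ≤ ProbabilityTheory.exponentialPDF Rl y * μ {ω | S ω ≤ t - y} :=
                mul_le_mul' h1 h2
        have hint2 : IntegrableOn
            (fun y : ℝ => (Rl * C * Real.exp (-(Sd + Rl) * t) / d.factorial) * (t - y) ^ d)
            (Icc (0:ℝ) t) := by
          exact (continuous_const.mul ((continuous_const.sub continuous_id).pow d)).integrableOn_Icc
        have hnn2 : 0 ≤ᵐ[volume.restrict (Icc (0:ℝ) t)]
            fun y : ℝ => (Rl * C * Real.exp (-(Sd + Rl) * t) / d.factorial) * (t - y) ^ d := by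
          refine (ae_restrict_iff' measurableSet_Icc).2 (ae_of_all _ fun y hy => ?_)
          exact mul_nonneg hc2 (pow_nonneg (by linarith [hy.2]) d)
        calc ENNReal.ofReal
              ((∏ k : Fin (d+1), R k) * Real.exp (-(∑ k : Fin (d+1), R k) * t) * t ^ (d+1)
                / (d+1).factorial)
            = ENNReal.ofReal
              (∫ y in Icc (0:ℝ) t, (Rl * C * Real.exp (-(Sd + Rl) * t) / d.factorial)
                * (t - y) ^ d) := by
              rw [my_integral_Icc_pow d ht]
              congr 1
              rw [hprodsucc, hsumsucc, Nat.factorial_succ]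
              push_cast
              field_simp
          _ = ∫⁻ y in Icc (0:ℝ) t, ENNReal.ofReal
                ((Rl * C * Real.exp (-(Sd + Rl) * t) / d.factorial) * (t - y) ^ d) :=
              ofReal_integral_eq_lintegral_ofReal hint2 hnn2
          _ ≤ ∫⁻ y in Icc (0:ℝ) t,
                ProbabilityTheory.exponentialPDF Rl y * μ {ω | S ω ≤ t - y} :=
              setLIntegral_mono (hpdfmeas.mul (gmeas t)) hptw
          _ ≤ ∫⁻ y, ProbabilityTheory.exponentialPDF Rl y * μ {ω | S ω ≤ t - y} :=
              setLIntegral_le_lintegral _ _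
      rw [hset]
      exact ⟨hlower, hupper⟩


/-- Short-time asymptotics of the probability of traversing a prescribed path of `d`
transitions: if `E₁, …, E_d` are independent exponential holding times with total exit
rates `R k ≥ r k`, and each jump chooses the prescribed transition with probability
`r k / R k`, then `P(E₁ + ⋯ + E_d ≤ t) ⋅ ∏_k (r_k/R_k) ~ (∏_k r_k) t^d / d!` as `t → 0+`. -/
theorem path_probability_asymptotics {Ω : Type*} [MeasurableSpace Ω]
    (μ : Measure Ω) [IsProbabilityMeasure μ]
    (d : ℕ) (hd : 1 ≤ d)
    (r R : Fin d → ℝ) (hr : ∀ k, 0 < r k) (hrR : ∀ k, r k ≤ R k)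
    (E : Fin d → Ω → ℝ) (hmeas : ∀ k, Measurable (E k))
    (hindep : iIndepFun E μ)
    (hexp : ∀ k, ∀ t : ℝ, 0 ≤ t →
      μ {ω | E k ω ≤ t} = ENNReal.ofReal (1 - Real.exp (-(R k) * t))) :
    Tendsto (fun t : ℝ =>
        ((μ {ω | (∑ k, E k ω) ≤ t}).toReal * ∏ k, r k / R k) /
          ((∏ k, r k) * t ^ d / Nat.factorial d))
      (𝓝[>] 0) (nhds 1) := by
  have hRpos : ∀ k, 0 < R k := fun k => lt_of_lt_of_le (hr k) (hrR k)
  have hB := my_sum_exp_bounds μ d R hRpos E hmeas hindep hexp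
  set s : ℝ := ∑ k, R k with hs
  have hCR : 0 < ∏ k, R k := Finset.prod_pos fun k _ => hRpos k
  have hCr : 0 < ∏ k, r k := Finset.prod_pos fun k _ => hr k
  have hfac : (0:ℝ) < d.factorial := by positivity
  have hratio : (∏ k, r k / R k) = (∏ k, r k) / (∏ k, R k) := Finset.prod_div_distrib _ _
  have hlow_tendsto : Tendsto (fun t : ℝ => Real.exp (-s * t)) (𝓝[>] 0) (𝓝 1) := by
    have h1 : Tendsto (fun t : ℝ => Real.exp (-s * t)) (𝓝 0) (𝓝 1) := by
      have hc : Continuous (fun t : ℝ => Real.exp (-s * t)) :=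
        Real.continuous_exp.comp (continuous_const.mul continuous_id)
      simpa using hc.tendsto 0
    exact h1.mono_left nhdsWithin_le_nhds
  refine tendsto_of_tendsto_of_tendsto_of_le_of_le' hlow_tendsto tendsto_const_nhds ?_ ?_
  · filter_upwards [self_mem_nhdsWithin] with t (ht : 0 < t)
    have hbd := (hB t).2 ht.le
    set F : ℝ := (μ {ω | (∑ k, E k ω) ≤ t}).toReal with hF
    have mfin : μ {ω | (∑ k, E k ω) ≤ t} ≠ ⊤ := measure_ne_top μ _
    have hlowR : (∏ k, R k) * Real.exp (-s * t) * t ^ d / d.factorial ≤ F := by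
      have := ENNReal.toReal_mono mfin hbd.1
      rwa [ENNReal.toReal_ofReal (by positivity)] at this
    have hD : (0:ℝ) < (∏ k, R k) * t ^ d / d.factorial := by positivity
    have hXeq : F * (∏ k, r k / R k) / ((∏ k, r k) * t ^ d / d.factorial)
        = F / ((∏ k, R k) * t ^ d / d.factorial) := by
      rw [hratio]
      field_simp
    rw [hXeq]
    rw [le_div_iff₀ hD]
    calc Real.exp (-s * t) * ((∏ k, R k) * t ^ d / d.factorial)
        = (∏ k, R k) * Real.exp (-s * t) * t ^ d / d.factorial := by ring
      _ ≤ F := hlowR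
  · filter_upwards [self_mem_nhdsWithin] with t (ht : 0 < t)
    have hbd := (hB t).2 ht.le
    set F : ℝ := (μ {ω | (∑ k, E k ω) ≤ t}).toReal with hF
    have huppR : F ≤ (∏ k, R k) * t ^ d / d.factorial :=
      ENNReal.toReal_le_of_le_ofReal (by positivity) hbd.2
    have hD : (0:ℝ) < (∏ k, R k) * t ^ d / d.factorial := by positivity
    have hXeq : F * (∏ k, r k / R k) / ((∏ k, r k) * t ^ d / d.factorial)
        = F / ((∏ k, R k) * t ^ d / d.factorial) := by
      rw [hratio]
      field_simp
    rw [hXeq]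
    exact (div_le_one hD).2 huppR
end

section
/- Let U and U' be finite target sets with U^far = {j ∈ U : d(j) = d} = {j ∈ U' : d'(j) = d}, where d(j) denotes the distance data entering the fastest-FPT asymptotics, and suppose every j ∈ U ∪ U' has d(j) ≤ d with equality exactly on U^far, and the fastest FPT moments satisfy N^{m/d(J)} E[(T_N(J))^m] → c_J > 0 for every nonempty J ⊆ U ∪ U'. Then the cover times σ_N(U) and σ_N(U') of the two targets satisfy E[(σ_N(U))^m] / E[(σ_N(U'))^m] → 1 as N → ∞. -/
open MeasureTheory Filter
open scoped ENNReal

/-- Pointwise: the `m`-th power of a finite sup of nonnegative reals is at most the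
sum of the `m`-th powers. -/
lemma aux_ofReal_sup'_le_sum {ι : Type*} (s : Finset ι) (hs : s.Nonempty) (f : ι → ℝ)
    {m : ℝ} : ENNReal.ofReal ((s.sup' hs f) ^ m) ≤ ∑ j ∈ s, ENNReal.ofReal ((f j) ^ m) := by
  obtain ⟨j0, hj0, heq⟩ := Finset.exists_mem_eq_sup' hs f
  rw [heq]
  exact Finset.single_le_sum (f := fun j => ENNReal.ofReal ((f j) ^ m))
    (fun _ _ => zero_le) hj0

/-- Pointwise splitting of a sup over `s` into the sup over `t ⊆ s` plus the sum over
`s \ t`. -/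
lemma aux_ofReal_sup'_split {ι : Type*} [DecidableEq ι] {s t : Finset ι} (hst : t ⊆ s)
    (hs : s.Nonempty) (ht : t.Nonempty) (f : ι → ℝ) (hf : ∀ j, 0 ≤ f j)
    {m : ℝ} (hm : 0 < m) :
    ENNReal.ofReal ((s.sup' hs f) ^ m) ≤
      ENNReal.ofReal ((t.sup' ht f) ^ m) + ∑ j ∈ s \ t, ENNReal.ofReal ((f j) ^ m) := by
  obtain ⟨j0, hj0, heq⟩ := Finset.exists_mem_eq_sup' hs f
  rw [heq]
  by_cases h : j0 ∈ t
  · exact le_trans (ENNReal.ofReal_le_ofReal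
      (Real.rpow_le_rpow (hf j0) (Finset.le_sup' f h) hm.le)) le_self_add
  · exact le_trans (Finset.single_le_sum (f := fun j => ENNReal.ofReal ((f j) ^ m))
      (fun _ _ => zero_le) (Finset.mem_sdiff.mpr ⟨hj0, h⟩)) le_add_self

/-- The many-searcher cover time depends only on the farthest target nodes: if two finite
target sets `U` and `U'` have the same set of farthest nodes (nodes at maximal distance
`D`), all other nodes being strictly closer, and the fastest-FPT moments satisfy
`N^{m/d(J)} E[(T_N(J))^m] → c_J > 0` for every nonempty `J ⊆ U ∪ U'` (where
`d(J) = min_{j ∈ J} d(j)` and `T_N(J) = min_{j ∈ J} T_N(j)`), then the `m`-th moments of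
the cover times of `U` and `U'` are asymptotically equal as `N → ∞`. -/
theorem cover_time_depends_only_on_farthest {Ω : Type*} [MeasurableSpace Ω]
    (μ : Measure Ω) [IsProbabilityMeasure μ]
    {ι : Type*} [DecidableEq ι] (U U' : Finset ι) (hU : U.Nonempty) (hU' : U'.Nonempty)
    (T : ℕ → ι → Ω → ℝ)  -- T N j = fastest FPT to node j among N searchers
    (hTmeas : ∀ N j, Measurable (T N j)) (hTnonneg : ∀ N j ω, 0 ≤ T N j ω)
    (d : ι → ℕ) (D : ℕ) (hD : 1 ≤ D)
    (hle : ∀ j ∈ U ∪ U', d j ≤ D)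
    (hfar_eq : U.filter (fun j => d j = D) = U'.filter (fun j => d j = D))
    (hfar_ne : (U.filter (fun j => d j = D)).Nonempty)
    (m : ℝ) (hm : 0 < m)
    (hmom : ∀ J : Finset ι, J ⊆ U ∪ U' → ∀ hJ : J.Nonempty, ∃ c : ℝ, 0 < c ∧
      Tendsto (fun N : ℕ => (N : ℝ) ^ (m / ((J.inf' hJ d : ℕ) : ℝ)) *
          (∫⁻ ω, ENNReal.ofReal ((J.inf' hJ (fun j => T N j ω)) ^ m) ∂μ).toReal)
        atTop (nhds c)) :
    Tendsto (fun N : ℕ =>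
        (∫⁻ ω, ENNReal.ofReal ((U.sup' hU (fun j => T N j ω)) ^ m) ∂μ).toReal /
        (∫⁻ ω, ENNReal.ofReal ((U'.sup' hU' (fun j => T N j ω)) ^ m) ∂μ).toReal)
      atTop (nhds 1) := by
  classical
  set far : Finset ι := U.filter (fun j => d j = D) with hfar_def
  have hfarU : far ⊆ U := Finset.filter_subset _ _
  have hfarU' : far ⊆ U' := by
    have h := Finset.filter_subset (fun j => d j = D) U'
    rwa [← hfar_eq] at h
  have hfarD : ∀ j ∈ far, d j = D := fun j hj => (Finset.mem_filter.mp hj).2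
  have hUsub : U ⊆ U ∪ U' := Finset.subset_union_left
  have hU'sub : U' ⊆ U ∪ U' := Finset.subset_union_right
  have hDpos : (0 : ℝ) < (D : ℝ) := by exact_mod_cast hD
  have hmD : 0 < m / (D : ℝ) := div_pos hm hDpos
  -- singleton lintegrals
  set L : ℕ → ι → ℝ≥0∞ :=
    fun N j => ∫⁻ ω, ENNReal.ofReal ((T N j ω) ^ m) ∂μ with hLdef
  -- singleton moment asymptotics
  have hsingle : ∀ j ∈ U ∪ U', ∃ c : ℝ, 0 < c ∧
      Tendsto (fun N : ℕ => (N : ℝ) ^ (m / (d j : ℝ)) * (L N j).toReal)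
        atTop (nhds c) := by
    intro j hj
    obtain ⟨c, hc, ht⟩ := hmom {j} (by simpa using hj) ⟨j, Finset.mem_singleton_self j⟩
    exact ⟨c, hc, by simpa using ht⟩
  -- eventual finiteness of singleton lintegrals
  have hfin : ∀ j ∈ U ∪ U', ∀ᶠ N in atTop, L N j ≠ ∞ := by
    intro j hj
    obtain ⟨c, hc, ht⟩ := hsingle j hj
    filter_upwards [ht.eventually (eventually_gt_nhds hc)] with N hN
    intro htop
    rw [htop] at hN
    simp at hN
  have hfin_all : ∀ᶠ N in atTop, ∀ j ∈ U ∪ U', L N j ≠ ∞ :=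
    (Filter.eventually_all_finset _).mpr hfin
  -- nonnegativity helpers
  have hinfnn : ∀ (s : Finset ι) (hs : s.Nonempty) (N : ℕ) (ω : Ω),
      0 ≤ s.inf' hs (fun j => T N j ω) := fun s hs N ω =>
    Finset.le_inf' hs _ (fun j _ => hTnonneg N j ω)
  -- all distances are ≥ 1
  have hd1 : ∀ j ∈ U ∪ U', 1 ≤ d j := by
    intro j hj
    by_contra hcon
    have hdj0 : d j = 0 := by omega
    obtain ⟨j0, hj0⟩ := hfar_ne
    set J : Finset ι := insert j far with hJdef
    have hJne : J.Nonempty := ⟨j, Finset.mem_insert_self _ _⟩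
    have hJsub : J ⊆ U ∪ U' := by
      intro x hx
      rcases Finset.mem_insert.mp hx with h | h
      · exact h ▸ hj
      · exact hUsub (hfarU h)
    obtain ⟨c, hc, ht⟩ := hmom J hJsub hJne
    have hinfd : ((J.inf' hJne d : ℕ) : ℝ) = 0 := by
      have : J.inf' hJne d = 0 := by
        have h1 : J.inf' hJne d ≤ d j := Finset.inf'_le d (Finset.mem_insert_self _ _)
        omega
      rw [this]; norm_num
    rw [hinfd, div_zero] at ht
    simp only [Real.rpow_zero, one_mul] at ht
    -- the J-moment is eventually at most the j0-moment, which tends to 0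
    obtain ⟨c0, hc0, ht0⟩ := hsingle j0 (hUsub (hfarU hj0))
    have hd0 : d j0 = D := hfarD j0 hj0
    rw [hd0] at ht0
    have hzero : Tendsto (fun N : ℕ => (L N j0).toReal) atTop (nhds 0) := by
      have h1 : Tendsto (fun N : ℕ => ((N : ℝ)) ^ (-(m / (D : ℝ)))) atTop (nhds 0) :=
        (tendsto_rpow_neg_atTop hmD).comp tendsto_natCast_atTop_atTop
      have h2 := h1.mul ht0
      rw [zero_mul] at h2
      apply h2.congr'
      filter_upwards [eventually_ge_atTop 1] with N hN
      have hNpos : (0 : ℝ) < (N : ℝ) := by exact_mod_cast hN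
      rw [← mul_assoc, ← Real.rpow_add hNpos, neg_add_cancel, Real.rpow_zero, one_mul]
    have hle' : ∀ᶠ N in atTop,
        (∫⁻ ω, ENNReal.ofReal ((J.inf' hJne (fun j => T N j ω)) ^ m) ∂μ).toReal ≤
          (L N j0).toReal := by
      filter_upwards [hfin j0 (hUsub (hfarU hj0))] with N hN
      refine ENNReal.toReal_mono hN (lintegral_mono fun ω => ?_)
      refine ENNReal.ofReal_le_ofReal (Real.rpow_le_rpow (hinfnn J hJne N ω) ?_ hm.le)
      exact Finset.inf'_le _ (Finset.mem_insert_of_mem hj0)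
    exact absurd (le_of_tendsto_of_tendsto ht hzero hle') (not_le.mpr hc)
  -- measurability helpers
  have hmeas1 : ∀ N j, Measurable (fun ω => ENNReal.ofReal ((T N j ω) ^ m)) := fun N j =>
    ENNReal.measurable_ofReal.comp ((Real.continuous_rpow_const hm.le).measurable.comp
      (hTmeas N j))
  have hmeas_sup : ∀ (s : Finset ι) (hs : s.Nonempty) (N : ℕ),
      Measurable (fun ω => ENNReal.ofReal ((s.sup' hs (fun j => T N j ω)) ^ m)) := by
    intro s hs N
    apply ENNReal.measurable_ofReal.comp
    apply ((Real.continuous_rpow_const hm.le).measurable).comp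
    have h := Finset.measurable_sup' (α := ℝ) hs (f := fun j => T N j) (fun j _ => hTmeas N j)
    have he : (s.sup' hs (fun j => T N j)) = fun ω => s.sup' hs (fun j => T N j ω) := by
      funext ω; rw [Finset.sup'_apply]
    rwa [he] at h
  -- near-node contributions vanish at rate N^{m/D}
  have hnear : ∀ j ∈ U ∪ U', d j ≠ D →
      Tendsto (fun N : ℕ => (N : ℝ) ^ (m / (D : ℝ)) * (L N j).toReal) atTop (nhds 0) := by
    intro j hj hne
    obtain ⟨c, hc, ht⟩ := hsingle j hj
    have hdj1 : 1 ≤ d j := hd1 j hj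
    have hdjD : d j < D := lt_of_le_of_ne (hle j hj) hne
    have hdjpos : (0 : ℝ) < (d j : ℝ) := by exact_mod_cast hdj1
    have hlt : m / (D : ℝ) < m / (d j : ℝ) := by
      apply div_lt_div_of_pos_left hm hdjpos
      exact_mod_cast hdjD
    have h1 : Tendsto (fun N : ℕ => (N : ℝ) ^ (m / (D : ℝ) - m / (d j : ℝ)))
        atTop (nhds 0) := by
      have heq : m / (D : ℝ) - m / (d j : ℝ) = -(m / (d j : ℝ) - m / (D : ℝ)) := by ring
      rw [heq]
      exact (tendsto_rpow_neg_atTop (sub_pos.mpr hlt)).comp tendsto_natCast_atTop_atTop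
    have h2 := h1.mul ht
    rw [zero_mul] at h2
    apply h2.congr'
    filter_upwards [eventually_ge_atTop 1] with N hN
    have hNpos : (0 : ℝ) < (N : ℝ) := by exact_mod_cast hN
    rw [← mul_assoc, ← Real.rpow_add hNpos, sub_add_cancel]
  -- the far-set fastest-FPT moment
  obtain ⟨cfar, hcfar, htfar⟩ := hmom far (hfarU.trans hUsub) hfar_ne
  have hinfD : ((far.inf' hfar_ne d : ℕ) : ℝ) = (D : ℝ) := by
    have : far.inf' hfar_ne d = D := by
      obtain ⟨j0, hj0⟩ := hfar_ne
      refine le_antisymm ?_ (Finset.le_inf' _ _ (fun j hj => (hfarD j hj).ge))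
      exact le_of_le_of_eq (Finset.inf'_le d hj0) (hfarD j0 hj0)
    rw [this]
  rw [hinfD] at htfar
  set G : ℕ → ℝ := fun N =>
    (∫⁻ ω, ENNReal.ofReal ((far.inf' hfar_ne (fun j => T N j ω)) ^ m) ∂μ).toReal with hGdef
  -- error terms
  set e : ℕ → ℝ := fun N => ∑ j ∈ U \ far, (L N j).toReal with hedef
  set e' : ℕ → ℝ := fun N => ∑ j ∈ U' \ far, (L N j).toReal with he'def
  have henn : ∀ N, 0 ≤ e N := fun N =>
    Finset.sum_nonneg (fun j _ => ENNReal.toReal_nonneg)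
  have he'nn : ∀ N, 0 ≤ e' N := fun N =>
    Finset.sum_nonneg (fun j _ => ENNReal.toReal_nonneg)
  have hsdiff : ∀ (V : Finset ι), V ⊆ U ∪ U' → ∀ j ∈ V \ far, j ∈ U ∪ U' ∧ d j ≠ D := by
    intro V hV j hj
    obtain ⟨hjV, hjnf⟩ := Finset.mem_sdiff.mp hj
    refine ⟨hV hjV, fun hdj => ?_⟩
    rcases Finset.mem_union.mp (hV hjV) with h | h
    · exact hjnf (Finset.mem_filter.mpr ⟨h, hdj⟩)
    · exact hjnf (by rw [hfar_eq]; exact Finset.mem_filter.mpr ⟨h, hdj⟩)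
  have hte : Tendsto (fun N : ℕ => (N : ℝ) ^ (m / (D : ℝ)) * e N) atTop (nhds 0) := by
    have h := tendsto_finset_sum (U \ far) (f := fun j (N : ℕ) =>
        (N : ℝ) ^ (m / (D : ℝ)) * (L N j).toReal) (fun j hj =>
      hnear j (hsdiff U hUsub j hj).1 (hsdiff U hUsub j hj).2)
    rw [Finset.sum_const_zero] at h
    refine h.congr (fun N => ?_)
    rw [hedef, Finset.mul_sum]
  have hte' : Tendsto (fun N : ℕ => (N : ℝ) ^ (m / (D : ℝ)) * e' N) atTop (nhds 0) := by
    have h := tendsto_finset_sum (U' \ far) (f := fun j (N : ℕ) =>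
        (N : ℝ) ^ (m / (D : ℝ)) * (L N j).toReal) (fun j hj =>
      hnear j (hsdiff U' hU'sub j hj).1 (hsdiff U' hU'sub j hj).2)
    rw [Finset.sum_const_zero] at h
    refine h.congr (fun N => ?_)
    rw [he'def, Finset.mul_sum]
  -- eventual positivity of G
  have hGpos : ∀ᶠ N in atTop, 0 < G N := by
    filter_upwards [htfar.eventually (eventually_gt_nhds hcfar), eventually_ge_atTop 1]
      with N hN hN1
    have hx : (0 : ℝ) < (N : ℝ) ^ (m / (D : ℝ)) :=
      Real.rpow_pos_of_pos (by exact_mod_cast hN1) _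
    by_contra hcon
    push_neg at hcon
    nlinarith [mul_nonpos_of_nonneg_of_nonpos hx.le hcon]
  -- the main eventual bound
  have hmain : ∀ᶠ N in atTop,
      |(∫⁻ ω, ENNReal.ofReal ((U.sup' hU (fun j => T N j ω)) ^ m) ∂μ).toReal /
        (∫⁻ ω, ENNReal.ofReal ((U'.sup' hU' (fun j => T N j ω)) ^ m) ∂μ).toReal - 1| ≤
        (e N + e' N) / G N := by
    filter_upwards [hfin_all, hGpos] with N hfinN hGN
    set IU : ℝ≥0∞ := ∫⁻ ω, ENNReal.ofReal ((U.sup' hU (fun j => T N j ω)) ^ m) ∂μ with hIU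
    set IU' : ℝ≥0∞ := ∫⁻ ω, ENNReal.ofReal ((U'.sup' hU' (fun j => T N j ω)) ^ m) ∂μ with hIU'
    set IF : ℝ≥0∞ := ∫⁻ ω, ENNReal.ofReal ((far.sup' hfar_ne (fun j => T N j ω)) ^ m) ∂μ
      with hIF
    have hsum_ne : ∀ (V : Finset ι), V ⊆ U ∪ U' → (∑ j ∈ V, L N j) ≠ ∞ := by
      intro V hV
      exact (ENNReal.sum_lt_top.mpr (fun j hj => (hfinN j (hV hj)).lt_top)).ne
    have hboundsup : ∀ (s : Finset ι) (hs : s.Nonempty),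
        (∫⁻ ω, ENNReal.ofReal ((s.sup' hs (fun j => T N j ω)) ^ m) ∂μ) ≤ ∑ j ∈ s, L N j := by
      intro s hs
      calc (∫⁻ ω, ENNReal.ofReal ((s.sup' hs (fun j => T N j ω)) ^ m) ∂μ)
          ≤ ∫⁻ ω, ∑ j ∈ s, ENNReal.ofReal ((T N j ω) ^ m) ∂μ :=
            lintegral_mono (fun ω => aux_ofReal_sup'_le_sum s hs _)
        _ = ∑ j ∈ s, L N j := lintegral_finset_sum s (fun j _ => hmeas1 N j)
    have hIUne : IU ≠ ∞ :=
      ((hboundsup U hU).trans_lt (hsum_ne U hUsub).lt_top).ne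
    have hIU'ne : IU' ≠ ∞ :=
      ((hboundsup U' hU').trans_lt (hsum_ne U' hU'sub).lt_top).ne
    have hIFne : IF ≠ ∞ :=
      ((hboundsup far hfar_ne).trans_lt (hsum_ne far (hfarU.trans hUsub)).lt_top).ne
    -- splitting bounds
    have hsplit : ∀ (V : Finset ι) (hV : V.Nonempty), far ⊆ V → V ⊆ U ∪ U' →
        (∫⁻ ω, ENNReal.ofReal ((V.sup' hV (fun j => T N j ω)) ^ m) ∂μ).toReal ≤
          IF.toReal + ∑ j ∈ V \ far, (L N j).toReal := by
      intro V hV hfarV hVsub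
      have h1 : (∫⁻ ω, ENNReal.ofReal ((V.sup' hV (fun j => T N j ω)) ^ m) ∂μ) ≤
          IF + ∑ j ∈ V \ far, L N j := by
        calc (∫⁻ ω, ENNReal.ofReal ((V.sup' hV (fun j => T N j ω)) ^ m) ∂μ)
            ≤ ∫⁻ ω, (ENNReal.ofReal ((far.sup' hfar_ne (fun j => T N j ω)) ^ m) +
                ∑ j ∈ V \ far, ENNReal.ofReal ((T N j ω) ^ m)) ∂μ :=
              lintegral_mono (fun ω => aux_ofReal_sup'_split hfarV hV hfar_ne _
                (fun j => hTnonneg N j ω) hm)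
          _ = IF + ∑ j ∈ V \ far, L N j := by
              rw [lintegral_add_left (hmeas_sup far hfar_ne N)]
              rw [lintegral_finset_sum _ (fun j _ => hmeas1 N j)]
      have hsne : (∑ j ∈ V \ far, L N j) ≠ ∞ :=
        hsum_ne _ ((Finset.sdiff_subset).trans hVsub)
      have h2 := ENNReal.toReal_mono (ENNReal.add_ne_top.mpr ⟨hIFne, hsne⟩) h1
      rwa [ENNReal.toReal_add hIFne hsne,
        ENNReal.toReal_sum (fun j hj => hfinN j ((Finset.sdiff_subset.trans hVsub) hj))] at h2
    have hAF : IU.toReal ≤ IF.toReal + e N := hsplit U hU hfarU hUsub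
    have hAF' : IU'.toReal ≤ IF.toReal + e' N := hsplit U' hU' hfarU' hU'sub
    -- lower bounds
    have hFA : IF.toReal ≤ IU.toReal := by
      refine ENNReal.toReal_mono hIUne (lintegral_mono (fun ω => ?_))
      refine ENNReal.ofReal_le_ofReal (Real.rpow_le_rpow ?_ ?_ hm.le)
      · obtain ⟨j0, hj0⟩ := hfar_ne
        exact le_trans (hTnonneg N j0 ω) (Finset.le_sup' (fun j => T N j ω) hj0)
      · exact Finset.sup'_mono _ hfarU hfar_ne
    have hFA' : IF.toReal ≤ IU'.toReal := by
      refine ENNReal.toReal_mono hIU'ne (lintegral_mono (fun ω => ?_))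
      refine ENNReal.ofReal_le_ofReal (Real.rpow_le_rpow ?_ ?_ hm.le)
      · obtain ⟨j0, hj0⟩ := hfar_ne
        exact le_trans (hTnonneg N j0 ω) (Finset.le_sup' (fun j => T N j ω) hj0)
      · exact Finset.sup'_mono _ hfarU' hfar_ne
    have hGA' : G N ≤ IU'.toReal := by
      refine ENNReal.toReal_mono hIU'ne (lintegral_mono (fun ω => ?_))
      refine ENNReal.ofReal_le_ofReal (Real.rpow_le_rpow (hinfnn far hfar_ne N ω) ?_ hm.le)
      obtain ⟨j0, hj0⟩ := hfar_ne
      exact le_trans (Finset.inf'_le _ hj0) (Finset.le_sup' (fun j => T N j ω) (hfarU' hj0))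
    have hA'pos : 0 < IU'.toReal := lt_of_lt_of_le hGN hGA'
    have heq : IU.toReal / IU'.toReal - 1 = (IU.toReal - IU'.toReal) / IU'.toReal := by
      field_simp
    rw [heq, abs_div, abs_of_pos hA'pos]
    have habs : |IU.toReal - IU'.toReal| ≤ e N + e' N := by
      rw [abs_sub_le_iff]
      constructor <;> linarith [henn N, he'nn N]
    exact div_le_div₀ (add_nonneg (henn N) (he'nn N)) habs hGN hGA'
  -- the ratio of error to far moment tends to 0
  have hR : Tendsto (fun N : ℕ => (e N + e' N) / G N) atTop (nhds 0) := by
    have h := (hte.add hte').div htfar (ne_of_gt hcfar)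
    rw [add_zero, zero_div] at h
    apply h.congr'
    filter_upwards [eventually_ge_atTop 1] with N hN
    have hxpos : (0 : ℝ) < (N : ℝ) ^ (m / (D : ℝ)) :=
      Real.rpow_pos_of_pos (by exact_mod_cast hN) _
    simp only [Pi.div_apply]
    rw [← mul_add, mul_div_mul_left _ _ (ne_of_gt hxpos)]
  have h0 := squeeze_zero_norm' (hmain.mono (fun N h => by rwa [Real.norm_eq_abs])) hR
  have h1 := h0.add (tendsto_const_nhds (x := (1 : ℝ)))
  rw [zero_add] at h1
  refine h1.congr (fun N => ?_)
  ring
end
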